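/- Let T, L, P > 0 and let (n_m, h^{(m)}, t^{(m)}, ρ^{(m)}, k_m)_{m∈ℕ} be a refinement sequence. If the sequence (‖h^{(m)}‖_∞)_{m∈ℕ} of maximal step-sizes does not converge to 0, then there exist τ_−, τ_+ ∈ [0,T] with τ_− < τ_+ and m_0 ∈ ℕ such that for every m ≥ m_0 there exists j_m ∈ [1,n_m] with t^{(m)}_{j_m−1} = τ_− and t^{(m)}_{j_m} = τ_+. -/

import Mathlib

noncomputable section

/-- The local error term `𝓔_j(h,t,ρ)` of the Euler scheme error bound:
`𝓔_0 = e^{LT} ρ_0/2` and `𝓔_j = e^{L(T-t_j)}(e^{L h_j}-1)(P h_j + ρ_j/2 + ρ_j/(2 L h_j))`. -/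
def calE (T L P : ℝ) (h t ρ : ℕ → ℝ) (j : ℕ) : ℝ :=
  if j = 0 then Real.exp (L * T) * ρ 0 / 2
  else Real.exp (L * (T - t j)) * (Real.exp (L * h j) - 1) *
    (P * h j + ρ j / 2 + ρ j / (2 * L * h j))

/-- The error bound `E(h,t,ρ) = ∑_{j=0}^n 𝓔_j(h,t,ρ)` for a discretization of length `n`. -/
def Ebound (T L P : ℝ) (n : ℕ) (h t ρ : ℕ → ℝ) : ℝ :=
  ∑ j ∈ Finset.range (n + 1), calE T L P h t ρ j

/-- The `h`-component of the subdivision rule `ψ[h,t,ρ;k]`: for `k = 0` the step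
sizes are unchanged, for `k ∈ [1,n]` the entry `h_k` is replaced by the two
entries `h_k/2, h_k/2` and later entries are shifted. -/
def psiH (h : ℕ → ℝ) (k : ℕ) : ℕ → ℝ := fun j =>
  if k = 0 then h j
  else if j < k then h j
  else if j ≤ k + 1 then h k / 2
  else h (j - 1)

/-- The `t`-component of the subdivision rule `ψ[h,t,ρ;k]`: for `k = 0` the nodes
are unchanged, for `k ∈ [1,n]` the node `t_k - h_k/2` is inserted between
`t_{k-1}` and `t_k`. -/
def psiT (h t : ℕ → ℝ) (k : ℕ) : ℕ → ℝ := fun j =>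
  if k = 0 then t j
  else if j < k then t j
  else if j = k then t k - h k / 2
  else t (j - 1)

/-- The `ρ`-component of the subdivision rule `ψ[h,t,ρ;k]`: for `k = 0` the entry
`ρ_0` is replaced by `ρ_0/4`, for `k ∈ [1,n]` the entry `ρ_k` is replaced by the
two entries `ρ_k/4, ρ_k/4` and later entries are shifted. -/
def psiRho (ρ : ℕ → ℝ) (k : ℕ) : ℕ → ℝ := fun j =>
  if k = 0 then (if j = 0 then ρ 0 / 4 else ρ j)
  else if j < k then ρ j
  else if j ≤ k + 1 then ρ k / 4
  else ρ (j - 1)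

/-- The length of the discretization produced by `ψ[h,t,ρ;k]` from one of length `n`:
`n` if `k = 0`, and `n + 1` otherwise. -/
def newn (n k : ℕ) : ℕ := if k = 0 then n else n + 1

/-- `ΔE(h,t,ρ;k) = E(ψ[h,t,ρ;k]) - E(h,t,ρ)`. -/
def deltaE (T L P : ℝ) (n : ℕ) (h t ρ : ℕ → ℝ) (k : ℕ) : ℝ :=
  Ebound T L P (newn n k) (psiH h k) (psiT h t k) (psiRho ρ k) - Ebound T L P n h t ρ

/-- The cost estimator `C(h,t,ρ) = ∑_{j=0}^{n-1} (v_R(t_j)/ρ_j^{d_R}) ·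
(v_F(t_j) h_{j+1}^{d_F} / ρ_{j+1}^{d_F})`. -/
def costC (dR dF : ℕ) (vR vF : ℝ → ℝ) (n : ℕ) (h t ρ : ℕ → ℝ) : ℝ :=
  ∑ j ∈ Finset.range n,
    (vR (t j) / ρ j ^ dR) * (vF (t j) * h (j + 1) ^ dF / ρ (j + 1) ^ dF)

/-- `ΔC(h,t,ρ;k) = C(ψ[h,t,ρ;k]) - C(h,t,ρ)`. -/
def deltaC (dR dF : ℕ) (vR vF : ℝ → ℝ) (n : ℕ) (h t ρ : ℕ → ℝ) (k : ℕ) : ℝ :=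
  costC dR dF vR vF (newn n k) (psiH h k) (psiT h t k) (psiRho ρ k) -
    costC dR dF vR vF n h t ρ

/-- A refinement sequence `(n_m, h^{(m)}, t^{(m)}, ρ^{(m)}, k_m)` as generated by the
iterative refinement algorithm: it starts from the trivial discretization
`n_0 = 1`, `h^{(0)} = (T)`, `t^{(0)} = (0,T)`, `ρ^{(0)} = (2LPT², 2LPT²)`, and in each
step applies the subdivision rule `ψ` at the index `k_m ∈ [0, n_m]`. -/
def RefinementSeq (T L P : ℝ) (n : ℕ → ℕ) (h t ρ : ℕ → ℕ → ℝ) (k : ℕ → ℕ) : Prop :=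
  n 0 = 1 ∧ h 0 1 = T ∧ t 0 0 = 0 ∧ t 0 1 = T ∧
    ρ 0 0 = 2 * L * P * T ^ 2 ∧ ρ 0 1 = 2 * L * P * T ^ 2 ∧
    (∀ m, k m ≤ n m) ∧
    (∀ m, h (m + 1) = psiH (h m) (k m)) ∧
    (∀ m, t (m + 1) = psiT (h m) (t m) (k m)) ∧
    (∀ m, ρ (m + 1) = psiRho (ρ m) (k m)) ∧
    (∀ m, n (m + 1) = newn (n m) (k m))

theorem stmt_13 (T L P : ℝ) (hT : 0 < T) (hL : 0 < L) (hP : 0 < P)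
    (n : ℕ → ℕ) (h t ρ : ℕ → ℕ → ℝ) (k : ℕ → ℕ)
    (href : RefinementSeq T L P n h t ρ k)
    (hdiv : ¬ Filter.Tendsto
        (fun m => sSup {x : ℝ | ∃ j, 1 ≤ j ∧ j ≤ n m ∧ x = h m j})
        Filter.atTop (nhds 0)) :
    ∃ τm τp : ℝ, τm ∈ Set.Icc (0 : ℝ) T ∧ τp ∈ Set.Icc (0 : ℝ) T ∧ τm < τp ∧
      ∃ m₀ : ℕ, ∀ m, m₀ ≤ m →
        ∃ jm, 1 ≤ jm ∧ jm ≤ n m ∧ t m (jm - 1) = τm ∧ t m jm = τp := by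
  obtain ⟨hn0, hh01, ht00, ht01, -, -, hkle, hH, hTt, -, hN⟩ := href
  -- n m ≥ 1
  have hn1 : ∀ m, 1 ≤ n m := by
    intro m
    induction m with
    | zero => omega
    | succ m ih => rw [hN m]; unfold newn; split <;> omega
  -- the dyadic invariant
  have Inv : ∀ m j, 1 ≤ j → j ≤ n m →
      ∃ d i : ℕ, i + 1 ≤ 2 ^ d ∧ t m (j - 1) = i * (T / 2 ^ d) ∧
        t m j = (i + 1) * (T / 2 ^ d) ∧ h m j = T / 2 ^ d := by
    intro m
    induction m with
    | zero =>
      intro j hj1 hj2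
      have hj : j = 1 := by omega
      subst hj
      exact ⟨0, 0, by norm_num, by simpa using ht00, by simpa using ht01,
        by simpa using hh01⟩
    | succ m ih =>
      intro j hj1 hj2
      rw [hN m] at hj2
      rw [hH m, hTt m]
      by_cases hk0 : k m = 0
      · simp only [newn, hk0, if_pos rfl] at hj2
        simp only [psiH, psiT, hk0, if_pos rfl]
        exact ih j hj1 hj2
      · have hk1 : 1 ≤ k m := by omega
        have hkn := hkle m
        simp only [newn, if_neg hk0] at hj2
        rcases Nat.lt_trichotomy j (k m) with hlt | heq | hgt
        · have hlt' : j - 1 < k m := by omega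
          simp only [psiH, psiT, if_neg hk0, if_pos hlt, if_pos hlt']
          exact ih j hj1 (by omega)
        · subst heq
          obtain ⟨d, i, hi, ha, hb, hh⟩ := ih (k m) hk1 hkn
          have hlt' : k m - 1 < k m := by omega
          have h1 : ¬ k m < k m := by omega
          have h2 : k m ≤ k m + 1 := by omega
          refine ⟨d + 1, 2 * i, by rw [pow_succ]; omega, ?_, ?_, ?_⟩
          · simp only [psiT, if_neg hk0, if_pos hlt']
            rw [ha]; push_cast; rw [pow_succ]; field_simp
          · simp only [psiT, if_neg hk0, if_neg h1, if_pos rfl]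
            rw [hb, hh]; push_cast; rw [pow_succ]; field_simp; ring
          · simp only [psiH, if_neg hk0, if_neg h1, if_pos h2]
            rw [hh, pow_succ]; ring
        · rcases Nat.eq_or_lt_of_le hgt with heq1 | hgt1
          · -- j = k m + 1
            have heq1' : j = k m + 1 := heq1.symm
            subst heq1'
            obtain ⟨d, i, hi, ha, hb, hh⟩ := ih (k m) hk1 hkn
            have h1 : ¬ k m + 1 < k m := by omega
            have h2 : k m + 1 ≤ k m + 1 := by omega
            have h3 : k m + 1 ≠ k m := by omega
            have h4 : k m + 1 - 1 = k m := by omega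
            refine ⟨d + 1, 2 * i + 1, by rw [pow_succ]; omega, ?_, ?_, ?_⟩
            · have h5 : ¬ k m + 1 - 1 < k m := by omega
              simp only [psiT, if_neg hk0, if_neg h5, h4, if_pos rfl, if_neg (lt_irrefl (k m))]
              rw [hb, hh]; push_cast; rw [pow_succ]; field_simp; ring
            · simp only [psiT, if_neg hk0, if_neg h1, if_neg h3, h4]
              rw [hb]; push_cast; rw [pow_succ]; field_simp; ring
            · simp only [psiH, if_neg hk0, if_neg h1, if_pos h2]
              rw [hh, pow_succ]; ring
          · -- j > k m + 1
            have h1 : ¬ j < k m := by omega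
            have h2 : ¬ j ≤ k m + 1 := by omega
            have h3 : j ≠ k m := by omega
            have h5 : ¬ j - 1 < k m := by omega
            have h6 : j - 1 ≠ k m := by omega
            simp only [psiH, psiT, if_neg hk0, if_neg h1, if_neg h2, if_neg h3,
              if_neg h5, if_neg h6]
            have := ih (j - 1) (by omega) (by omega)
            simpa using this
  -- strict monotonicity of nodes
  have hstep : ∀ m j, j + 1 ≤ n m → t m j < t m (j + 1) := by
    intro m j hj
    obtain ⟨d, i, hi, ha, hb, -⟩ := Inv m (j + 1) (by omega) hj
    simp only [Nat.add_sub_cancel] at ha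
    rw [ha, hb]
    have : (0:ℝ) < T / 2 ^ d := by positivity
    push_cast
    nlinarith
  have hmono : ∀ m j1 j2, j1 < j2 → j2 ≤ n m → t m j1 < t m j2 := by
    intro m j1 j2 h12 h2
    induction j2 with
    | zero => omega
    | succ j2 ih =>
      rcases Nat.lt_or_ge j1 j2 with hl | hg
      · exact lt_trans (ih hl (by omega)) (hstep m j2 (by omega))
      · have : j1 = j2 := by omega
        subst this
        exact hstep m j1 h2
  -- nodes persist
  have node_mono : ∀ m x, (∃ j, j ≤ n m ∧ t m j = x) →
      ∀ m', m ≤ m' → ∃ j, j ≤ n m' ∧ t m' j = x := by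
    intro m x hx m' hm'
    induction m' with
    | zero =>
      have : m = 0 := by omega
      subst this; exact hx
    | succ m' ih =>
      rcases Nat.lt_or_ge m (m' + 1) with hlt | hge
      · obtain ⟨j, hj, hjx⟩ := ih (by omega)
        rw [hTt m', hN m']
        by_cases hk0 : k m' = 0
        · exact ⟨j, by simp [newn, hk0]; omega, by simp [psiT, hk0, hjx]⟩
        · rcases Nat.lt_or_ge j (k m') with hl | hg
          · exact ⟨j, by simp [newn, hk0]; omega, by simp [psiT, hk0, hl, hjx]⟩
          · refine ⟨j + 1, by simp [newn, hk0]; omega, ?_⟩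
            have h1 : ¬ j + 1 < k m' := by omega
            have h2 : j + 1 ≠ k m' := by omega
            simp [psiT, hk0, h1, h2, hjx]
      · have : m = m' + 1 := by omega
        subst this; exact hx
  -- aliveness
  set Alv : ℕ → ℝ → ℝ → Prop := fun m a b =>
    ∃ j, 1 ≤ j ∧ j ≤ n m ∧ t m (j - 1) = a ∧ t m j = b with hAlv
  -- death is permanent
  have death : ∀ m a b, Alv m a b → ¬ Alv (m + 1) a b →
      ∀ m', m + 1 ≤ m' → ¬ Alv m' a b := by
    rintro m a b ⟨j, hj1, hjn, ha, hb⟩ hnot m' hm'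
    have hkj : k m = j := by
      by_contra hne
      apply hnot
      by_cases hk0 : k m = 0
      · refine ⟨j, hj1, ?_, ?_, ?_⟩
        · rw [hN m]; simp [newn, hk0]; omega
        · rw [hTt m]; simp [psiT, hk0, ha]
        · rw [hTt m]; simp [psiT, hk0, hb]
      · rcases Nat.lt_or_ge j (k m) with hlt | hge
        · refine ⟨j, hj1, ?_, ?_, ?_⟩
          · rw [hN m]; simp [newn, hk0]; omega
          · have h5 : j - 1 < k m := by omega
            rw [hTt m]; simp [psiT, hk0, h5, ha]
          · rw [hTt m]; simp [psiT, hk0, hlt, hb]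
        · have hgt : k m < j := by omega
          refine ⟨j + 1, by omega, ?_, ?_, ?_⟩
          · rw [hN m]; simp [newn, hk0]; omega
          · have h1 : ¬ j + 1 - 1 < k m := by omega
            have h2 : j + 1 - 1 ≠ k m := by omega
            rw [hTt m]; simp only [psiT, if_neg hk0, if_neg h1, if_neg h2]
            simpa using ha
          · have h1 : ¬ j + 1 < k m := by omega
            have h2 : j + 1 ≠ k m := by omega
            rw [hTt m]; simp only [psiT, if_neg hk0, if_neg h1, if_neg h2]
            simpa using hb
    have hk0 : k m ≠ 0 := by omega
    subst hkj
    obtain ⟨d, i, hi, hai, hbi, hhi⟩ := Inv m (k m) hj1 hjn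
    have hTd : (0:ℝ) < T / 2 ^ d := by positivity
    have hnode : ∃ jc, jc ≤ n (m + 1) ∧ t (m + 1) jc = t m (k m) - h m (k m) / 2 := by
      refine ⟨k m, ?_, ?_⟩
      · rw [hN m]; simp [newn, hk0]; omega
      · have h1 : ¬ k m < k m := by omega
        rw [hTt m]
        simp [psiT, if_neg hk0, if_neg h1]
    rintro ⟨j', hj'1, hj'n, ha', hb'⟩
    obtain ⟨jc, hjc, hc'⟩ := node_mono (m + 1) _ hnode m' hm'
    have hca : a < t m (k m) - h m (k m) / 2 := by
      rw [← ha, hai, hbi, hhi]; push_cast; nlinarith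
    have hcb : t m (k m) - h m (k m) / 2 < b := by
      rw [← hb, hbi, hhi]; push_cast; nlinarith
    have h1 : t m' (j' - 1) < t m' jc := by rw [ha', hc']; exact hca
    have h2 : t m' jc < t m' j' := by rw [hc', hb']; exact hcb
    have idx1 : j' - 1 < jc := by
      by_contra hcon
      push_neg at hcon
      rcases Nat.eq_or_lt_of_le hcon with he | hl
      · rw [he] at h1; exact lt_irrefl _ h1
      · exact absurd (hmono m' jc (j' - 1) hl (by omega)) (by linarith)
    have idx2 : jc < j' := by
      by_contra hcon
      push_neg at hcon
      rcases Nat.eq_or_lt_of_le hcon with he | hl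
      · rw [he] at h2; exact lt_irrefl _ h2
      · exact absurd (hmono m' j' jc hl hjc) (by linarith)
    omega
  -- from divergence: get ε and frequently large maximal step
  rw [Metric.tendsto_atTop] at hdiv
  push_neg at hdiv
  obtain ⟨ε, hε, hfr0⟩ := hdiv
  -- sSup of the step set is attained
  have hSmem : ∀ m, ∃ j, 1 ≤ j ∧ j ≤ n m ∧
      sSup {x : ℝ | ∃ j, 1 ≤ j ∧ j ≤ n m ∧ x = h m j} = h m j := by
    intro m
    have hset : {x : ℝ | ∃ j, 1 ≤ j ∧ j ≤ n m ∧ x = h m j} =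
        ↑((Finset.Icc 1 (n m)).image (h m)) := by
      ext x
      simp only [Set.mem_setOf_eq, Finset.coe_image, Set.mem_image,
        Finset.mem_coe, Finset.mem_Icc]
      constructor
      · rintro ⟨j, hj1, hj2, rfl⟩; exact ⟨j, ⟨hj1, hj2⟩, rfl⟩
      · rintro ⟨j, ⟨hj1, hj2⟩, rfl⟩; exact ⟨j, hj1, hj2, rfl⟩
    have hne : {x : ℝ | ∃ j, 1 ≤ j ∧ j ≤ n m ∧ x = h m j}.Nonempty :=
      ⟨h m 1, 1, le_refl 1, hn1 m, rfl⟩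
    have hfin : {x : ℝ | ∃ j, 1 ≤ j ∧ j ≤ n m ∧ x = h m j}.Finite := by
      rw [hset]; exact (Finset.finite_toSet _)
    obtain ⟨j, hj1, hj2, hj3⟩ := hne.csSup_mem hfin
    exact ⟨j, hj1, hj2, hj3⟩
  -- the finite set of candidate intervals
  set F : Set (ℝ × ℝ) := {p | ∃ d i : ℕ, i + 1 ≤ 2 ^ d ∧ ε ≤ T / 2 ^ d ∧
    p.1 = i * (T / 2 ^ d) ∧ p.2 = (i + 1) * (T / 2 ^ d)} with hF
  have hFfin : F.Finite := by
    set D : ℕ := ⌈T / ε⌉₊ with hD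
    have hsub : F ⊆ (fun q : ℕ × ℕ => (((q.2 : ℝ)) * (T / 2 ^ q.1),
        ((q.2 : ℝ) + 1) * (T / 2 ^ q.1))) '' (Set.Iic D ×ˢ Set.Iic (2 ^ D)) := by
      rintro ⟨a, b⟩ ⟨d, i, hi, hεd, ha, hb⟩
      have hdD : d ≤ D := by
        have h2d : (2:ℝ) ^ d ≤ T / ε := by
          rw [le_div_iff₀ hε]
          rw [le_div_iff₀ (by positivity : (0:ℝ) < 2 ^ d)] at hεd
          nlinarith
        have hd2 : (d : ℝ) < 2 ^ d := by
          exact_mod_cast Nat.lt_two_pow_self (n := d)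
        have hlt : d < D := Nat.lt_ceil.mpr (lt_of_lt_of_le hd2 h2d)
        omega
      have hiD : i ≤ 2 ^ D := le_trans (by omega) (Nat.pow_le_pow_right (by norm_num) hdD)
      refine ⟨(d, i), ⟨hdD, hiD⟩, ?_⟩
      have ha' : a = (i : ℝ) * (T / 2 ^ d) := ha
      have hb' : b = ((i : ℝ) + 1) * (T / 2 ^ d) := hb
      simp [ha', hb']
    exact Set.Finite.subset (Set.Finite.image _ ((Set.finite_Iic D).prod (Set.finite_Iic _))) hsub
  -- frequently there is an alive pair in F
  have hfreq : ∃ᶠ m in Filter.atTop, ∃ p ∈ F, Alv m p.1 p.2 := by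
    rw [Filter.frequently_atTop]
    intro N
    obtain ⟨m, hm, hdist⟩ := hfr0 N
    obtain ⟨j, hj1, hj2, hj3⟩ := hSmem m
    obtain ⟨d, i, hi, hai, hbi, hhi⟩ := Inv m j hj1 hj2
    have hεh : ε ≤ h m j := by
      have : (0:ℝ) < h m j := by rw [hhi]; positivity
      rw [Real.dist_eq, sub_zero, hj3, abs_of_pos this] at hdist
      exact hdist
    refine ⟨m, hm, ⟨(t m (j - 1), t m j), ⟨d, i, hi, ?_, hai, hbi⟩,
      j, hj1, hj2, rfl, rfl⟩⟩
    rw [← hhi]; exact hεh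
  -- pigeonhole: some pair is alive frequently
  have hpigeon : ∃ p ∈ F, ∃ᶠ m in Filter.atTop, Alv m p.1 p.2 := by
    by_contra hc
    push_neg at hc
    have hev : ∀ᶠ m in Filter.atTop, ∀ p ∈ F, ¬ Alv m p.1 p.2 :=
      (Filter.eventually_all_finite hFfin).mpr hc
    obtain ⟨m, ⟨p, hp, hal⟩, hno⟩ := (hfreq.and_eventually hev).exists
    exact hno p hp hal
  obtain ⟨p, hpF, hpfr⟩ := hpigeon
  rw [Filter.frequently_atTop] at hpfr
  obtain ⟨m₁, -, hm₁⟩ := hpfr 0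
  have hall : ∀ jj, Alv (m₁ + jj) p.1 p.2 := by
    intro jj
    induction jj with
    | zero => exact hm₁
    | succ jj ih =>
      by_contra hno
      obtain ⟨m₂, hm₂, hal₂⟩ := hpfr (m₁ + jj + 1)
      exact death (m₁ + jj) p.1 p.2 ih hno m₂ hm₂ hal₂
  obtain ⟨d, i, hi, hεd, ha, hb⟩ := hpF
  have hTd : (0:ℝ) < T / 2 ^ d := by positivity
  have hi' : ((i : ℝ) + 1) ≤ 2 ^ d := by exact_mod_cast hi
  refine ⟨p.1, p.2, ⟨?_, ?_⟩, ⟨?_, ?_⟩, ?_, m₁, ?_⟩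
  · rw [ha]; positivity
  · rw [ha]
    have : (i : ℝ) * (T / 2 ^ d) ≤ 2 ^ d * (T / 2 ^ d) := by nlinarith
    calc (i:ℝ) * (T / 2 ^ d) ≤ 2 ^ d * (T / 2 ^ d) := this
      _ = T := by field_simp
  · rw [hb]; positivity
  · rw [hb]
    calc ((i:ℝ) + 1) * (T / 2 ^ d) ≤ 2 ^ d * (T / 2 ^ d) := by nlinarith
      _ = T := by field_simp
  · rw [ha, hb]; nlinarith
  · intro m hm
    have := hall (m - m₁)
    rw [Nat.add_sub_cancel' hm] at this
    exact this
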